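/- arXiv:2405.16411 — 2 statements merged into one kernel-verified Lean document; each statement's English description precedes it below -/
import Mathlib

section
/- Closed form of the tensor attention gradient: in the setting of the definitions below, define Loss(x) := Σ_{j0=1}^n Σ_{i0=1}^d 0.5 · V(x)_{j0,i0}², where V(x)_{j0,i0} := ⟨F(x)_{j0}, H_{i0}⟩ − E_{j0,i0}. Define W(x)_{j0} := Σ_{i0=1}^d V(x)_{j0,i0} H_{i0} ∈ ℝ^{n²} and P(x)_{j0} := (diag(F(x)_{j0}) − F(x)_{j0} F(x)_{j0}^⊤) W(x)_{j0} ∈ ℝ^{n²}, and let P(x) ∈ ℝ^{n×n²} be the matrix whose j0-th row is P(x)_{j0}^⊤. Then the gradient of Loss with respect to x ∈ ℝ^{d³} satisfies dLoss(x)/dx = vec(A1^⊤ P(x) (A2 ⊗ A3)) ∈ ℝ^{d³}. -/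
/-!
Each row block `j0` of the loss is a squared error of linear readouts of the softmax
`F = softmax(𝖠_{j0} x)`. Moving `x` in direction `v` moves `F` at rate `(diag F - F Fᵀ) 𝖠_{j0} v`,
so the loss moves at rate `Σ_{j0} ⟨(diag F - F Fᵀ) 𝖠_{j0} v, W_{j0}⟩`. The softmax Jacobian
`diag F - F Fᵀ` is symmetric, so this equals `Σ_{j0} ⟨𝖠_{j0} v, P_{j0}⟩`, which for a coordinate
vector `v` is an entry of `A1ᵀ P (A2 ⊗ A3)`.
-/

open Matrix

/-- Kronecker product `⊗`: `(K1 ⊗ K2) (i1, i2) (j1, j2) = K1 i1 j1 * K2 i2 j2`. -/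
def kron {α β γ δ : Type*} (K1 : Matrix α γ ℝ) (K2 : Matrix β δ ℝ) :
    Matrix (α × β) (γ × δ) ℝ :=
  Matrix.of fun i j => K1 i.1 j.1 * K2 i.2 j.2

/-- The sub-block `𝖠_{j0} ∈ ℝ^{n²×d³}` of the triple Kronecker product
`𝖠 = A1 ⊗ A2 ⊗ A3 ∈ ℝ^{n³×d³}` consisting of the rows whose first (major) index is `j0`:
`(𝖠_{j0}) (i2, i3) (a, b, c) = A1 j0 a * A2 i2 b * A3 i3 c`. -/
def Ablock {n d : ℕ} (A1 A2 A3 : Matrix (Fin n) (Fin d) ℝ) (j0 : Fin n) :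
    Matrix (Fin n × Fin n) (Fin d × Fin d × Fin d) ℝ :=
  Matrix.of fun p q => A1 j0 q.1 * A2 p.1 q.2.1 * A3 p.2 q.2.2

/-- `K(x)_{j0} := exp(𝖠_{j0} x) ∈ ℝ^{n²}` (entrywise exponential). -/
noncomputable def Kfun {n d : ℕ} (A1 A2 A3 : Matrix (Fin n) (Fin d) ℝ)
    (x : Fin d × Fin d × Fin d → ℝ) (j0 : Fin n) : Fin n × Fin n → ℝ :=
  fun p => Real.exp ((Ablock A1 A2 A3 j0).mulVec x p)

/-- `α(x)_{j0} := ⟨exp(𝖠_{j0} x), 1_{n²}⟩`. -/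
noncomputable def alphaFun {n d : ℕ} (A1 A2 A3 : Matrix (Fin n) (Fin d) ℝ)
    (x : Fin d × Fin d × Fin d → ℝ) (j0 : Fin n) : ℝ :=
  ∑ p, Kfun A1 A2 A3 x j0 p

/-- `F(x)_{j0} := α(x)_{j0}⁻¹ K(x)_{j0} ∈ ℝ^{n²}`. -/
noncomputable def Ffun {n d : ℕ} (A1 A2 A3 : Matrix (Fin n) (Fin d) ℝ)
    (x : Fin d × Fin d × Fin d → ℝ) (j0 : Fin n) : Fin n × Fin n → ℝ :=
  fun p => (alphaFun A1 A2 A3 x j0)⁻¹ * Kfun A1 A2 A3 x j0 p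

/-- `V(x)_{j0,i0} := ⟨F(x)_{j0}, H_{i0}⟩ − E_{j0,i0}`. -/
noncomputable def Vval {n d : ℕ} (A1 A2 A3 : Matrix (Fin n) (Fin d) ℝ)
    (H : Matrix (Fin n × Fin n) (Fin d) ℝ) (E : Matrix (Fin n) (Fin d) ℝ)
    (x : Fin d × Fin d × Fin d → ℝ) (j0 : Fin n) (i0 : Fin d) : ℝ :=
  (∑ p, Ffun A1 A2 A3 x j0 p * H p i0) - E j0 i0

/-- `W(x)_{j0} := Σ_{i0} V(x)_{j0,i0} H_{i0} ∈ ℝ^{n²}`. -/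
noncomputable def Wvec {n d : ℕ} (A1 A2 A3 : Matrix (Fin n) (Fin d) ℝ)
    (H : Matrix (Fin n × Fin n) (Fin d) ℝ) (E : Matrix (Fin n) (Fin d) ℝ)
    (x : Fin d × Fin d × Fin d → ℝ) (j0 : Fin n) : Fin n × Fin n → ℝ :=
  fun p => ∑ i0, Vval A1 A2 A3 H E x j0 i0 * H p i0

/-- `P(x)_{j0} := (diag(F(x)_{j0}) − F(x)_{j0} F(x)_{j0}ᵀ) W(x)_{j0} ∈ ℝ^{n²}`. -/
noncomputable def Pvec {n d : ℕ} (A1 A2 A3 : Matrix (Fin n) (Fin d) ℝ)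
    (H : Matrix (Fin n × Fin n) (Fin d) ℝ) (E : Matrix (Fin n) (Fin d) ℝ)
    (x : Fin d × Fin d × Fin d → ℝ) (j0 : Fin n) : Fin n × Fin n → ℝ :=
  (Matrix.diagonal (Ffun A1 A2 A3 x j0)
    - Matrix.vecMulVec (Ffun A1 A2 A3 x j0) (Ffun A1 A2 A3 x j0)).mulVec
      (Wvec A1 A2 A3 H E x j0)

/-- `P(x) ∈ ℝ^{n×n²}` is the matrix whose `j0`-th row is `P(x)_{j0}ᵀ`. -/
noncomputable def Pmat {n d : ℕ} (A1 A2 A3 : Matrix (Fin n) (Fin d) ℝ)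
    (H : Matrix (Fin n × Fin n) (Fin d) ℝ) (E : Matrix (Fin n) (Fin d) ℝ)
    (x : Fin d × Fin d × Fin d → ℝ) : Matrix (Fin n) (Fin n × Fin n) ℝ :=
  Matrix.of fun j0 p => Pvec A1 A2 A3 H E x j0 p

/-- `Loss(x) := Σ_{j0} Σ_{i0} 0.5 · V(x)_{j0,i0}²`. -/
noncomputable def Loss {n d : ℕ} (A1 A2 A3 : Matrix (Fin n) (Fin d) ℝ)
    (H : Matrix (Fin n × Fin n) (Fin d) ℝ) (E : Matrix (Fin n) (Fin d) ℝ)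
    (x : Fin d × Fin d × Fin d → ℝ) : ℝ :=
  ∑ j0, ∑ i0, 0.5 * (Vval A1 A2 A3 H E x j0 i0) ^ 2

open Finset

section Softmax

variable {ι : Type*} [Fintype ι]

noncomputable def softmax (v : ι → ℝ) : ι → ℝ :=
  fun p => (∑ q, Real.exp (v q))⁻¹ * Real.exp (v p)

variable [DecidableEq ι]

noncomputable def softmaxJacobian (v : ι → ℝ) : Matrix ι ι ℝ :=
  diagonal (softmax v) - vecMulVec (softmax v) (softmax v)

theorem isSymm_softmaxJacobian (v : ι → ℝ) : (softmaxJacobian v).IsSymm :=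
  (isSymm_diagonal _).sub (transpose_vecMulVec _ _)

theorem softmaxJacobian_mulVec_apply (v a : ι → ℝ) (p : ι) :
    (softmaxJacobian v *ᵥ a) p = softmax v p * (a p - softmax v ⬝ᵥ a) := by
  simp only [softmaxJacobian, sub_mulVec, Pi.sub_apply, mulVec_diagonal, vecMulVec_mulVec,
    Pi.smul_apply, op_smul_eq_mul]
  ring

theorem softmaxJacobian_mulVec_dotProduct (v a w : ι → ℝ) :
    (softmaxJacobian v *ᵥ a) ⬝ᵥ w = a ⬝ᵥ (softmaxJacobian v *ᵥ w) := by
  rw [dotProduct_comm, dotProduct_mulVec, ← mulVec_transpose, isSymm_softmaxJacobian,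
    dotProduct_comm]

theorem hasDerivAt_softmax {u : ℝ → ι → ℝ} {a : ι → ℝ} {t : ℝ} (hu : HasDerivAt u a t) :
    HasDerivAt (fun s => softmax (u s)) (softmaxJacobian (u t) *ᵥ a) t := by
  refine hasDerivAt_pi.2 fun p => ?_
  have hexp (q : ι) : HasDerivAt (fun s => Real.exp (u s q)) (Real.exp (u t q) * a q) t :=
    (hasDerivAt_pi.1 hu q).exp
  have hsum_pos : 0 < ∑ q, Real.exp (u t q) :=
    sum_pos (fun q _ => Real.exp_pos _) ⟨p, mem_univ p⟩
  have hsum := HasDerivAt.fun_sum fun q (_ : q ∈ univ) => hexp q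
  refine ((hsum.fun_inv hsum_pos.ne').mul (hexp p)).congr_deriv ?_
  rw [softmaxJacobian_mulVec_apply]
  simp only [softmax, dotProduct, mul_assoc, ← mul_sum]
  field_simp
  ring

end Softmax

theorem HasDerivAt.mulVec {m ι : Type*} [Fintype ι] {y : ℝ → ι → ℝ} {v : ι → ℝ} {t : ℝ}
    (hy : HasDerivAt y v t) (M : Matrix m ι ℝ) :
    HasDerivAt (fun s => M *ᵥ y s) (M *ᵥ v) t :=
  hasDerivAt_pi.2 fun p =>
    HasDerivAt.fun_sum fun q (_ : q ∈ univ) => (hasDerivAt_pi.1 hy q).const_mul (M p q)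

theorem hasDerivAt_sum_half_sq_sub {ι κ : Type*} [Fintype ι] [Fintype κ] {G : ℝ → ι → ℝ}
    {G' : ι → ℝ} {t : ℝ} (hG : HasDerivAt G G' t) (H : Matrix ι κ ℝ) (e : κ → ℝ) :
    HasDerivAt (fun s => ∑ k, 0.5 * ((∑ p, G s p * H p k) - e k) ^ 2)
      (G' ⬝ᵥ fun p => ∑ k, ((∑ q, G t q * H q k) - e k) * H p k) t := by
  have hres (k : κ) : HasDerivAt (fun s => (∑ p, G s p * H p k) - e k)
      (∑ p, G' p * H p k) t :=
    (HasDerivAt.fun_sum fun p (_ : p ∈ univ) =>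
      (hasDerivAt_pi.1 hG p).mul_const (H p k)).sub_const _
  refine (HasDerivAt.fun_sum fun k (_ : k ∈ univ) =>
    ((hres k).fun_pow 2).const_mul (0.5 : ℝ)).congr_deriv ?_
  simp only [dotProduct, mul_sum]
  rw [sum_comm]
  refine sum_congr rfl fun k _ => sum_congr rfl fun p _ => ?_
  push_cast
  ring

section TensorAttention

variable {n d : ℕ} (A1 A2 A3 : Matrix (Fin n) (Fin d) ℝ)

theorem transpose_mul_mul_kron_apply (P : Matrix (Fin n) (Fin n × Fin n) ℝ)
    (i : Fin d × Fin d × Fin d) :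
    (A1ᵀ * P * kron A2 A3) i.1 i.2 = ∑ j0, (Ablock A1 A2 A3 j0)ᵀ i ⬝ᵥ P j0 := by
  simp only [mul_apply, transpose_apply, kron, Ablock, of_apply, dotProduct, sum_mul]
  rw [sum_comm]
  exact sum_congr rfl fun j0 _ => sum_congr rfl fun p _ => by ring

variable (H : Matrix (Fin n × Fin n) (Fin d) ℝ) (E : Matrix (Fin n) (Fin d) ℝ)

theorem hasDerivAt_Loss_comp {y : ℝ → Fin d × Fin d × Fin d → ℝ}
    {v : Fin d × Fin d × Fin d → ℝ} {t : ℝ} (hy : HasDerivAt y v t) :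
    HasDerivAt (fun s => Loss A1 A2 A3 H E (y s))
      (∑ j0, (Ablock A1 A2 A3 j0 *ᵥ v) ⬝ᵥ Pvec A1 A2 A3 H E (y t) j0) t := by
  have hF (j0 : Fin n) : HasDerivAt (fun s => Ffun A1 A2 A3 (y s) j0)
      (softmaxJacobian (Ablock A1 A2 A3 j0 *ᵥ y t) *ᵥ (Ablock A1 A2 A3 j0 *ᵥ v)) t :=
    hasDerivAt_softmax (hy.mulVec _)
  -- `Ffun`, `Wvec` and `Pvec` unfold definitionally to `softmax`, the readout residual and
  -- `softmaxJacobian _ *ᵥ Wvec _`, so the lemmas apply without rewriting.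
  refine (HasDerivAt.fun_sum fun j0 (_ : j0 ∈ univ) =>
    hasDerivAt_sum_half_sq_sub (hF j0) H (E j0)).congr_deriv ?_
  exact sum_congr rfl fun j0 _ => softmaxJacobian_mulVec_dotProduct _ _ _

end TensorAttention

/-- Closed form of the tensor attention gradient:
`dLoss(x)/dx = vec(A1ᵀ P(x) (A2 ⊗ A3)) ∈ ℝ^{d³}`, stated coordinatewise: for every
coordinate `i`, the partial derivative of `Loss` at `x` in coordinate `i` equals the
`i`-th entry of `vec(A1ᵀ P(x) (A2 ⊗ A3))`. -/
theorem tensor_attention_gradient {n d : ℕ} (A1 A2 A3 : Matrix (Fin n) (Fin d) ℝ)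
    (H : Matrix (Fin n × Fin n) (Fin d) ℝ) (E : Matrix (Fin n) (Fin d) ℝ)
    (x : Fin d × Fin d × Fin d → ℝ) (i : Fin d × Fin d × Fin d) :
    HasDerivAt (fun t : ℝ => Loss A1 A2 A3 H E (Function.update x i t))
      ((A1ᵀ * Pmat A1 A2 A3 H E x * kron A2 A3) i.1 i.2) (x i) := by
  have h := hasDerivAt_Loss_comp A1 A2 A3 H E (hasDerivAt_update x i (x i))
  rw [Function.update_eq_self] at h
  convert h using 1
  simp only [mulVec_single_one, transpose_mul_mul_kron_apply]
  rfl
end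

section
/- Second derivative bound for the attention loss curve: there exists an absolute constant C > 0 such that the following holds. Let H ∈ ℝ^{n×n²} be a fixed matrix with all entries in the interval [1, B_a] and such that in each row at least half of the entries equal B_a, and let V ∈ ℝ^{n²×d} have all entries in {0,1}. For λ ∈ ℝ, let M_λ := exp(λH) ∈ ℝ^{n×n²} (entrywise exponential) and define f(λ) := ‖diag(M_λ 1_{n²})^{−1} M_λ V‖_F². Then f is twice differentiable on ℝ and for every λ ∈ ℝ, |f″(λ)| ≤ C · B_a² · n · d. -/
/-!
Row `i` of the attention output, column `l`, is the average `E_t[v]` of `v = V(·, l)` under the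
softmax distribution `p_t(j) ∝ exp (t * H i j)`. Differentiating in `t` gives the covariance
`E_t[h v] - E_t[h] E_t[v]`, so every derivative is again a polynomial in such averages, and an
average of a quantity bounded by `c` is bounded by `c`. With `|h| ≤ B` and `|v| ≤ 1` this yields
`|E'| ≤ 2B`, `|E''| ≤ 6B²`, hence `|(E²)''| = |2E'² + 2E E''| ≤ 20B²`; summing over the
`n d` entries gives the bound with `C = 20`.
-/

open Matrix Real Finset

section Softmax

variable {ι : Type*} [Fintype ι]

noncomputable def softmaxAvg (h v : ι → ℝ) (t : ℝ) : ℝ :=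
  (∑ j, exp (t * h j) * v j) / ∑ j, exp (t * h j)

noncomputable def softmaxCov (h v : ι → ℝ) (t : ℝ) : ℝ :=
  softmaxAvg h (h * v) t - softmaxAvg h h t * softmaxAvg h v t

noncomputable def softmaxCovDeriv (h v : ι → ℝ) (t : ℝ) : ℝ :=
  softmaxCov h (h * v) t - softmaxCov h h t * softmaxAvg h v t
    - softmaxAvg h h t * softmaxCov h v t

variable [Nonempty ι] (h v : ι → ℝ) (t : ℝ)

lemma softmax_partition_pos : 0 < ∑ j, exp (t * h j) :=
  sum_pos (fun _ _ => exp_pos _) univ_nonempty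

lemma hasDerivAt_softmaxAvg : HasDerivAt (softmaxAvg h v) (softmaxCov h v t) t := by
  have hZ : HasDerivAt (fun t => ∑ j, exp (t * h j)) (∑ j, exp (t * h j) * h j) t :=
    HasDerivAt.fun_sum fun j _ => (hasDerivAt_mul_const (h j)).exp
  have hN : HasDerivAt (fun t => ∑ j, exp (t * h j) * v j)
      (∑ j, exp (t * h j) * (h * v) j) t :=
    HasDerivAt.fun_sum fun j _ =>
      ((hasDerivAt_mul_const (h j)).exp.mul_const (v j)).congr_deriv
        (by simp only [Pi.mul_apply]; ring)
  refine (hN.div hZ (softmax_partition_pos h t).ne').congr_deriv ?_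
  simp only [softmaxCov, softmaxAvg]
  field_simp

lemma hasDerivAt_softmaxCov : HasDerivAt (softmaxCov h v) (softmaxCovDeriv h v t) t :=
  ((hasDerivAt_softmaxAvg h (h * v) t).sub
    ((hasDerivAt_softmaxAvg h h t).mul (hasDerivAt_softmaxAvg h v t))).congr_deriv
    (by rw [softmaxCovDeriv]; ring)

lemma abs_softmaxAvg_le {c : ℝ} (hv : ∀ j, |v j| ≤ c) : |softmaxAvg h v t| ≤ c := by
  have hZ := softmax_partition_pos h t
  rw [softmaxAvg, abs_div, abs_of_pos hZ, div_le_iff₀ hZ, mul_sum]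
  refine (abs_sum_le_sum_abs _ _).trans (sum_le_sum fun j _ => ?_)
  rw [abs_mul, abs_of_pos (exp_pos _), mul_comm]
  exact mul_le_mul_of_nonneg_right (hv j) (exp_pos _).le

variable {h v}

lemma abs_softmaxCov_le {B c : ℝ} (hh : ∀ j, |h j| ≤ B) (hv : ∀ j, |v j| ≤ c) :
    |softmaxCov h v t| ≤ 2 * B * c := by
  have hB : 0 ≤ B := (abs_nonneg _).trans (hh (Classical.arbitrary ι))
  have hhv (j : ι) : |(h * v) j| ≤ B * c := by
    rw [Pi.mul_apply, abs_mul]; exact mul_le_mul (hh j) (hv j) (abs_nonneg _) hB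
  calc |softmaxCov h v t|
      ≤ |softmaxAvg h (h * v) t| + |softmaxAvg h h t| * |softmaxAvg h v t| := by
        rw [softmaxCov, ← abs_mul]; exact abs_sub _ _
    _ ≤ B * c + B * c := by
        gcongr
        exacts [abs_softmaxAvg_le _ _ _ hhv, abs_softmaxAvg_le _ _ _ hh,
          abs_softmaxAvg_le _ _ _ hv]
    _ = 2 * B * c := by ring

lemma abs_softmaxCovDeriv_le {B c : ℝ} (hh : ∀ j, |h j| ≤ B) (hv : ∀ j, |v j| ≤ c) :
    |softmaxCovDeriv h v t| ≤ 6 * B ^ 2 * c := by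
  have hB : 0 ≤ B := (abs_nonneg _).trans (hh (Classical.arbitrary ι))
  have hc : 0 ≤ c := (abs_nonneg _).trans (hv (Classical.arbitrary ι))
  have hhv (j : ι) : |(h * v) j| ≤ B * c := by
    rw [Pi.mul_apply, abs_mul]; exact mul_le_mul (hh j) (hv j) (abs_nonneg _) hB
  calc |softmaxCovDeriv h v t|
      ≤ |softmaxCov h (h * v) t| + |softmaxCov h h t| * |softmaxAvg h v t|
        + |softmaxAvg h h t| * |softmaxCov h v t| := by
        rw [softmaxCovDeriv, ← abs_mul, ← abs_mul]
        exact (abs_sub _ _).trans (add_le_add_left (abs_sub _ _) _)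
    _ ≤ 2 * B * (B * c) + 2 * B * B * c + B * (2 * B * c) := by
        gcongr
        exacts [abs_softmaxCov_le _ hh hhv, abs_softmaxCov_le _ hh hh, abs_softmaxAvg_le _ _ _ hv,
          abs_softmaxAvg_le _ _ _ hh, abs_softmaxCov_le _ hh hv]
    _ = 6 * B ^ 2 * c := by ring


variable (h v) in
lemma hasDerivAt_softmaxAvg_sq :
    HasDerivAt (fun t => softmaxAvg h v t ^ 2) (2 * softmaxAvg h v t * softmaxCov h v t) t :=
  ((hasDerivAt_softmaxAvg h v t).pow 2).congr_deriv (by ring)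

variable (h v) in
lemma hasDerivAt_two_mul_softmaxAvg_mul_softmaxCov :
    HasDerivAt (fun t => 2 * softmaxAvg h v t * softmaxCov h v t)
      (2 * softmaxCov h v t ^ 2 + 2 * softmaxAvg h v t * softmaxCovDeriv h v t) t :=
  (((hasDerivAt_softmaxAvg h v t).const_mul 2).mul (hasDerivAt_softmaxCov h v t)).congr_deriv
    (by ring)

lemma abs_softmaxAvg_sq_deriv2_le {B c : ℝ} (hh : ∀ j, |h j| ≤ B) (hv : ∀ j, |v j| ≤ c) :
    |2 * softmaxCov h v t ^ 2 + 2 * softmaxAvg h v t * softmaxCovDeriv h v t|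
      ≤ 20 * B ^ 2 * c ^ 2 := by
  have hc : 0 ≤ c := (abs_nonneg _).trans (hv (Classical.arbitrary ι))
  calc |2 * softmaxCov h v t ^ 2 + 2 * softmaxAvg h v t * softmaxCovDeriv h v t|
      ≤ 2 * |softmaxCov h v t| ^ 2 + 2 * (|softmaxAvg h v t| * |softmaxCovDeriv h v t|) := by
        refine (abs_add_le _ _).trans (le_of_eq ?_)
        rw [abs_mul, abs_mul, abs_mul, abs_two, abs_pow]
        ring
    _ ≤ 2 * (2 * B * c) ^ 2 + 2 * (c * (6 * B ^ 2 * c)) := by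
        gcongr
        exacts [abs_softmaxCov_le _ hh hv, abs_softmaxAvg_le _ _ _ hv,
          abs_softmaxCovDeriv_le _ hh hv]
    _ = 20 * B ^ 2 * c ^ 2 := by ring

end Softmax

lemma diagonal_mulVec_one_inv_mul_mul_apply {m k p K : Type*} [Fintype m] [DecidableEq m]
    [Fintype k] [Field K] (M : Matrix m k K) (V : Matrix k p K) (hM : ∀ i, (M *ᵥ 1) i ≠ 0)
    (i : m) (l : p) :
    ((diagonal (M *ᵥ 1))⁻¹ * M * V) i l = (M * V) i l / (M *ᵥ 1) i := by
  have hinv : (diagonal (M *ᵥ 1))⁻¹ = diagonal (M *ᵥ 1)⁻¹ :=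
    inv_eq_right_inv (by simp [diagonal_mul_diagonal, mul_inv_cancel₀ (hM _)])
  rw [Matrix.mul_assoc, hinv, diagonal_mul, Pi.inv_apply, inv_mul_eq_div]

lemma softmax_attention_apply {m k p : Type*} [Fintype m] [DecidableEq m] [Fintype k]
    [Nonempty k] (H : Matrix m k ℝ) (V : Matrix k p ℝ) (t : ℝ) (i : m) (l : p) :
    ((diagonal ((of fun i j => exp (t * H i j)) *ᵥ 1))⁻¹ * (of fun i j => exp (t * H i j)) * V)
      i l = softmaxAvg (H i) (fun j => V j l) t := by
  rw [diagonal_mulVec_one_inv_mul_mul_apply _ _ fun i => ?_]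
  · simp [softmaxAvg, mul_apply, mulVec, dotProduct]
  · simpa [mulVec, dotProduct] using (softmax_partition_pos (H i) t).ne'

/-- Second derivative bound for the attention loss curve: there is an absolute constant
`C > 0` such that for all `n, d`, `B_a ≥ 1`, `H ∈ ℝ^{n×n²}` with entries in `[1, B_a]` and
at least half of each row equal to `B_a`, and `V ∈ ℝ^{n²×d}` with `{0,1}` entries, the
function `f(λ) := ‖diag(M_λ 1)⁻¹ M_λ V‖_F²` (with `M_λ := exp(λH)` entrywise) is twice
differentiable and `|f″(λ)| ≤ C B_a² n d` for every `λ ∈ ℝ`. -/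
theorem attention_curve_second_derivative_bound :
    ∃ C : ℝ, 0 < C ∧
      ∀ (n d : ℕ) (Ba : ℝ), 1 ≤ Ba →
        ∀ H : Matrix (Fin n) (Fin n × Fin n) ℝ,
          (∀ i j, 1 ≤ H i j ∧ H i j ≤ Ba) →
          (∀ i : Fin n, n ^ 2 ≤ 2 * (Finset.univ.filter fun j => H i j = Ba).card) →
          ∀ V : Matrix (Fin n × Fin n) (Fin d) ℝ,
            (∀ i j, V i j = 0 ∨ V i j = 1) →
            ∀ f : ℝ → ℝ,
              (f = fun lam : ℝ =>
                ∑ i, ∑ l,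
                  (((Matrix.diagonal
                        ((Matrix.of fun i j => Real.exp (lam * H i j)).mulVec 1))⁻¹
                      * (Matrix.of fun i j => Real.exp (lam * H i j)) * V) i l) ^ 2) →
              Differentiable ℝ f ∧ Differentiable ℝ (deriv f) ∧
                ∀ lam : ℝ, |deriv (deriv f) lam| ≤ C * Ba ^ 2 * n * d := by
  refine ⟨20, by norm_num, fun n d Ba _ H hH _ V hV f hf => ?_⟩
  have hHB (i : Fin n) (j) : |H i j| ≤ Ba := abs_le.2 ⟨by linarith [hH i j], (hH i j).2⟩
  have hV1 (l : Fin d) (j) : |V j l| ≤ 1 := by rcases hV j l with h | h <;> simp [h]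
  have hne (i : Fin n) : Nonempty (Fin n × Fin n) := ⟨(i, i)⟩
  have hf' (t : ℝ) : HasDerivAt f
      (∑ i, ∑ l, 2 * softmaxAvg (H i) (V · l) t * softmaxCov (H i) (V · l) t) t := by
    subst hf
    exact HasDerivAt.fun_sum fun i _ => HasDerivAt.fun_sum fun l _ => by
      have := hne i
      simpa only [softmax_attention_apply] using hasDerivAt_softmaxAvg_sq (H i) (V · l) t
  have hf'' (t : ℝ) : HasDerivAt (deriv f) (∑ i, ∑ l, (2 * softmaxCov (H i) (V · l) t ^ 2
      + 2 * softmaxAvg (H i) (V · l) t * softmaxCovDeriv (H i) (V · l) t)) t := by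
    rw [show deriv f = _ from funext fun t => (hf' t).deriv]
    exact HasDerivAt.fun_sum fun i _ => HasDerivAt.fun_sum fun l _ =>
      have := hne i; hasDerivAt_two_mul_softmaxAvg_mul_softmaxCov (H i) (V · l) t
  refine ⟨fun t => (hf' t).differentiableAt, fun t => (hf'' t).differentiableAt, fun t => ?_⟩
  calc |deriv (deriv f) t|
      ≤ ∑ i, ∑ l, |2 * softmaxCov (H i) (V · l) t ^ 2
          + 2 * softmaxAvg (H i) (V · l) t * softmaxCovDeriv (H i) (V · l) t| := by
        rw [(hf'' t).deriv]
        exact (abs_sum_le_sum_abs _ _).trans (sum_le_sum fun i _ => abs_sum_le_sum_abs _ _)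
    _ ≤ ∑ _i : Fin n, ∑ _l : Fin d, 20 * Ba ^ 2 * 1 ^ 2 := by
        gcongr with i _ l _
        have := hne i
        exact abs_softmaxAvg_sq_deriv2_le t (hHB i) (hV1 l)
    _ = 20 * Ba ^ 2 * n * d := by
        simp only [one_pow, mul_one, sum_const, card_univ, Fintype.card_fin, nsmul_eq_mul]
        ring
end
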